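/- arXiv:1709.05506 — 5 statements merged into one kernel-verified Lean document; each statement's English description precedes it below -/
import Mathlib

section
/- Let l be a positive integer and let 𝒳 be a convex subset of ℝ^l that is the convex hull of a subset S ⊆ 𝒳. Let f : 𝒳 × 𝒳 → [0,1] be a symmetric function. Then f reproduces mixtures of connectivity behaviours from S if and only if there exist integers p ≥ 1 and q ≥ 0 with d = p + q ≤ l + 1, a matrix T ∈ ℝ^{d×l}, and a vector ν ∈ ℝ^d such that f(x,y) = (Tx + ν)ᵀ I_{p,q} (Ty + ν) for all x, y ∈ 𝒳. -/
open scoped BigOperators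
open Matrix

/-- `I_{p,q}`: the `d × d` diagonal matrix (`d = p + q`) with `p` ones followed by
`q` minus ones on its diagonal. -/
noncomputable def Ipq (p q : ℕ) : Matrix (Fin (p + q)) (Fin (p + q)) ℝ :=
  Matrix.diagonal fun i => if (i : ℕ) < p then (1 : ℝ) else -1

/-- `f` reproduces mixtures of connectivity behaviours from `S`: whenever
`x = ∑ α_r • u_r` with `u_r ∈ S`, `0 ≤ α_r ≤ 1`, `∑ α_r = 1`, one has
`f x y = ∑ α_r * f (u_r) y` for all `y ∈ X`. -/
def ReproducesMixtures {l : ℕ} (X S : Set (Fin l → ℝ))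
    (f : (Fin l → ℝ) → (Fin l → ℝ) → ℝ) : Prop :=
  ∀ (m : ℕ) (u : Fin m → (Fin l → ℝ)) (α : Fin m → ℝ),
    (∀ r, u r ∈ S) → (∀ r, 0 ≤ α r ∧ α r ≤ 1) → (∑ r, α r) = 1 →
    ∀ y ∈ X, f (∑ r, α r • u r) y = ∑ r, α r * f (u r) y

/-!
Mixing from `S` propagates to convex combinations of points of `X = conv S`, and then, by
splitting coefficients into positive and negative parts, to affine combinations. Choosing points
`ρ₁, …, ρₙ ∈ X` (`n ≤ l + 1`) whose lifts `(ρᵢ, 1)` form a basis of the span of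
`{(x, 1) | x ∈ X}` gives affine coordinates `κ` with `x = ∑ κᵢ(x) ρᵢ` and `∑ κᵢ(x) = 1`, hence
`f x y = κ(x)ᵀ A κ(y)` with the symmetric matrix `A = (f ρᵢ ρⱼ)`. Diagonalising `A` and sorting
its eigenvalues by sign gives `A = Mᵀ I_{p,q} M`; `p ≥ 1` because `κ(x₀)ᵀ A κ(x₀) = f x₀ x₀ ≥ 0`
with `κ(x₀) ≠ 0`, so `A` is not negative definite. Conversely, a kernel that is affine in its
first argument reproduces mixtures.
-/

theorem exists_affine_coordinates {k E : Type*} [Field k] [AddCommGroup E] [Module k E]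
    [FiniteDimensional k E] (X : Set E) :
    ∃ n ≤ Module.finrank k E + 1, ∃ ρ : Fin n → E, (∀ i, ρ i ∈ X) ∧
      ∃ κ : E →ᵃ[k] (Fin n → k), ∀ x ∈ X, ∑ i, κ x i = 1 ∧ ∑ i, κ x i • ρ i = x := by
  classical
  -- coordinates in a basis of `span {(x, 1) | x ∈ X}` drawn from that set are affine in `x`
  obtain ⟨b, hbX, hspan, hli⟩ := exists_linearIndependent k ((fun x : E => (x, (1 : k))) '' X)
  have : Fintype b := hli.setFinite.fintype
  let B := (Module.Basis.span hli).reindex (Fintype.equivFin b)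
  obtain ⟨K, hK⟩ := LinearMap.exists_extend B.equivFun.toLinearMap
  have hB : ∀ i, ∃ x ∈ X, (x, (1 : k)) = (B i : E × k) := fun i =>
    hbX (by simp [B, Module.Basis.span_apply])
  choose ρ hρX hρ using hB
  have hmem : ∀ x ∈ X, (x, (1 : k)) ∈ Submodule.span k (Set.range ((↑) : b → E × k)) := by
    intro x hx
    rw [Subtype.range_coe, hspan]
    exact Submodule.subset_span ⟨x, hx, rfl⟩
  have hsum : ∀ x ∈ X, ∑ i, K (x, 1) i • (ρ i, (1 : k)) = (x, 1) := by
    intro x hx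
    have := congrArg Subtype.val (B.sum_equivFun ⟨(x, 1), hmem x hx⟩)
    have hKx : K (x, 1) = B.equivFun ⟨(x, 1), hmem x hx⟩ :=
      LinearMap.congr_fun hK ⟨(x, 1), hmem x hx⟩
    simpa only [hKx, hρ, Submodule.coe_sum, Submodule.coe_smul] using this
  refine ⟨Fintype.card b, ?_, ρ, hρX,
    (K ∘ₗ LinearMap.inl k E k).toAffineMap + AffineMap.const k E (K (0, 1)), fun x hx => ?_⟩
  · simpa [Module.finrank_prod] using hli.fintype_card_le_finrank
  · have hκ : ((K ∘ₗ LinearMap.inl k E k).toAffineMap + AffineMap.const k E (K (0, 1))) x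
        = K (x, 1) := by
      simp [← map_add]
    rw [hκ]
    exact ⟨by simpa [Prod.snd_sum] using congrArg Prod.snd (hsum x hx),
      by simpa [Prod.fst_sum] using congrArg Prod.fst (hsum x hx)⟩

theorem AffineMap.exists_matrix_mulVec_add {R m n : Type*} [CommRing R] [Fintype n]
    [DecidableEq n] (κ : (n → R) →ᵃ[R] (m → R)) :
    ∃ (C : Matrix m n R) (c : m → R), ∀ x, κ x = C *ᵥ x + c :=
  ⟨LinearMap.toMatrix' κ.linear, κ 0, fun x => by
    rw [LinearMap.toMatrix'_mulVec]; exact congrFun κ.decomp x⟩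

theorem sum_smul_eq_sum_posPart_smul_sub {ι M : Type*} [Fintype ι] [AddCommGroup M] [Module ℝ M]
    (c : ι → ℝ) (g : ι → M) : ∑ r, c r • g r = ∑ r, (c r)⁺ • g r - ∑ r, (c r)⁻ • g r := by
  rw [← Finset.sum_sub_distrib]
  simp_rw [← sub_smul, posPart_sub_negPart]

theorem Fintype.exists_equiv_fin_lt_iff {n : Type*} [Fintype n] (P : n → Prop) [DecidablePred P] :
    ∃ p q, p + q = card n ∧ ∃ σ : Fin (p + q) ≃ n, ∀ i : Fin (p + q), (i : ℕ) < p ↔ P (σ i) := by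
  refine ⟨card {m // P m}, card {m // ¬ P m},
    by rw [card_subtype_compl, add_tsub_cancel_of_le (card_subtype_le P)],
    finSumFinEquiv.symm.trans (((equivFin _).symm.sumCongr (equivFin _).symm).trans
      (Equiv.sumCompl P)), fun i => ?_⟩
  induction i using Fin.addCases with
  | left a => simpa using ((equivFin {m // P m}).symm a).2
  | right a => simpa using ((equivFin {m // ¬ P m}).symm a).2

theorem Ipq_eq_submatrix_diagonal {n : Type*} [DecidableEq n] {p q : ℕ} (P : n → Prop)
    [DecidablePred P] (σ : Fin (p + q) ≃ n)
    (hσ : ∀ i : Fin (p + q), (i : ℕ) < p ↔ P (σ i)) :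
    Ipq p q = (diagonal fun m => if P m then (1 : ℝ) else -1).submatrix σ σ := by
  rw [submatrix_diagonal_equiv, Ipq]
  congr 1
  funext i
  simp only [Function.comp_apply, hσ]

theorem Matrix.diagonal_eq_transpose_mul_Ipq_mul {n : Type*} [Fintype n] [DecidableEq n]
    {p q : ℕ} (d : n → ℝ) (σ : Fin (p + q) ≃ n)
    (hσ : ∀ i : Fin (p + q), (i : ℕ) < p ↔ 0 ≤ d (σ i)) :
    diagonal d = ((diagonal fun m => √|d m|).submatrix σ id)ᵀ * Ipq p q *
      (diagonal fun m => √|d m|).submatrix σ id := by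
  rw [Ipq_eq_submatrix_diagonal (fun m => 0 ≤ d m) σ hσ, transpose_submatrix, diagonal_transpose,
    submatrix_mul_equiv, submatrix_mul_equiv, submatrix_id_id, diagonal_mul_diagonal,
    diagonal_mul_diagonal]
  congr 1
  funext m
  split_ifs with h
  · rw [mul_one, Real.mul_self_sqrt (abs_nonneg _), abs_of_nonneg h]
  · rw [mul_neg_one, neg_mul, Real.mul_self_sqrt (abs_nonneg _), abs_of_neg (not_le.mp h),
      neg_neg]

theorem Matrix.dotProduct_transpose_mul_mul_mulVec {R m n : Type*} [CommRing R] [Fintype m]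
    [Fintype n] (M : Matrix m n R) (B : Matrix m m R) (v w : n → R) :
    v ⬝ᵥ (Mᵀ * B * M) *ᵥ w = (M *ᵥ v) ⬝ᵥ B *ᵥ (M *ᵥ w) := by
  rw [← mulVec_mulVec, ← mulVec_mulVec, dotProduct_mulVec, vecMul_transpose]

namespace Matrix.IsHermitian

variable {n : Type*} [Fintype n] [DecidableEq n] {A : Matrix n n ℝ}

theorem eq_eigenvectorUnitary_mul_diagonal_mul_transpose (hA : A.IsHermitian) :
    A = (hA.eigenvectorUnitary : Matrix n n ℝ) * diagonal hA.eigenvalues *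
      (hA.eigenvectorUnitary : Matrix n n ℝ)ᵀ := by
  conv_lhs => rw [hA.spectral_theorem]
  simp [RCLike.ofReal_real_eq_id, star_eq_conjTranspose]

theorem eigenvectorUnitary_mul_transpose (hA : A.IsHermitian) :
    (hA.eigenvectorUnitary : Matrix n n ℝ) * (hA.eigenvectorUnitary : Matrix n n ℝ)ᵀ = 1 := by
  simpa [star_eq_conjTranspose] using Unitary.coe_mul_star_self hA.eigenvectorUnitary

theorem dotProduct_mulVec_self (hA : A.IsHermitian) (v : n → ℝ) :
    v ⬝ᵥ A *ᵥ v =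
      ∑ m, hA.eigenvalues m * ((hA.eigenvectorUnitary : Matrix n n ℝ)ᵀ *ᵥ v) m ^ 2 := by
  conv_lhs => rw [hA.eq_eigenvectorUnitary_mul_diagonal_mul_transpose]
  rw [← mulVec_mulVec, ← mulVec_mulVec, dotProduct_mulVec, ← mulVec_transpose]
  simp only [dotProduct, mulVec_diagonal]
  exact Finset.sum_congr rfl fun m _ => by ring

theorem dotProduct_mulVec_self_neg (hA : A.IsHermitian) (hneg : ∀ m, hA.eigenvalues m < 0)
    {v : n → ℝ} (hv : v ≠ 0) : v ⬝ᵥ A *ᵥ v < 0 := by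
  set w := (hA.eigenvectorUnitary : Matrix n n ℝ)ᵀ *ᵥ v
  obtain ⟨m, hm⟩ : ∃ m, w m ≠ 0 := by
    by_contra! hw
    apply hv
    rw [← one_mulVec v, ← hA.eigenvectorUnitary_mul_transpose, ← mulVec_mulVec]
    change _ *ᵥ w = 0
    rw [show w = 0 from funext hw, mulVec_zero]
  rw [hA.dotProduct_mulVec_self]
  refine Finset.sum_neg' ?_ ⟨m, Finset.mem_univ m, ?_⟩
  · exact fun i _ => mul_nonpos_of_nonpos_of_nonneg (hneg i).le (sq_nonneg _)
  · exact mul_neg_of_neg_of_pos (hneg m) (by positivity)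

theorem exists_eq_transpose_mul_Ipq_mul (hA : A.IsHermitian) {v : n → ℝ} (hv : v ≠ 0)
    (hvA : 0 ≤ v ⬝ᵥ A *ᵥ v) :
    ∃ p q, 1 ≤ p ∧ p + q = Fintype.card n ∧
      ∃ M : Matrix (Fin (p + q)) n ℝ, A = Mᵀ * Ipq p q * M := by
  obtain ⟨p, q, hpq, σ, hσ⟩ := Fintype.exists_equiv_fin_lt_iff fun m => 0 ≤ hA.eigenvalues m
  refine ⟨p, q, Nat.one_le_iff_ne_zero.mpr fun hp => ?_, hpq,
    (diagonal fun m => √|hA.eigenvalues m|).submatrix σ id *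
      (hA.eigenvectorUnitary : Matrix n n ℝ)ᵀ, ?_⟩
  · refine (hA.dotProduct_mulVec_self_neg (fun m => ?_) hv).not_ge hvA
    simpa [hp] using (hσ (σ.symm m)).not
  · conv_lhs => rw [hA.eq_eigenvectorUnitary_mul_diagonal_mul_transpose,
      diagonal_eq_transpose_mul_Ipq_mul _ σ hσ]
    simp only [transpose_mul, transpose_transpose, Matrix.mul_assoc]

end Matrix.IsHermitian

theorem reproducesMixtures_of_affine {l : ℕ} {X S : Set (Fin l → ℝ)}
    {f : (Fin l → ℝ) → (Fin l → ℝ) → ℝ} (hX : Convex ℝ X) (hSX : S ⊆ X)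
    (h : ∀ y ∈ X, ∃ (w : Fin l → ℝ) (c : ℝ), ∀ x ∈ X, f x y = w ⬝ᵥ x + c) :
    ReproducesMixtures X S f := by
  intro m u α hu hα hα1 y hy
  obtain ⟨w, c, hwc⟩ := h y hy
  rw [hwc _ (hX.sum_mem (fun r _ => (hα r).1) hα1 fun r _ => hSX (hu r))]
  simp only [hwc _ (hSX (hu _)), dotProduct_sum, dotProduct_smul, smul_eq_mul, mul_add,
    Finset.sum_add_distrib, ← Finset.sum_mul, hα1, one_mul]

namespace ReproducesMixtures

variable {l : ℕ} {X S : Set (Fin l → ℝ)} {f : (Fin l → ℝ) → (Fin l → ℝ) → ℝ}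
  {ι : Type} [Fintype ι]

theorem apply_sum_smul_of_mem_S (hf : ReproducesMixtures X S f) {u : ι → Fin l → ℝ}
    {α : ι → ℝ} (hu : ∀ r, u r ∈ S) (hα : ∀ r, 0 ≤ α r) (hα1 : ∑ r, α r = 1) {y : Fin l → ℝ}
    (hy : y ∈ X) : f (∑ r, α r • u r) y = ∑ r, α r * f (u r) y := by
  have hα_le : ∀ r, α r ≤ 1 := fun r =>
    hα1 ▸ Finset.single_le_sum (fun i _ => hα i) (Finset.mem_univ r)
  let e := (Fintype.equivFin ι).symm
  have h := hf _ (u ∘ e) (α ∘ e) (fun _ => hu _) (fun _ => ⟨hα _, hα_le _⟩)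
    (by simpa only [Function.comp_apply, e.sum_comp] using hα1) y hy
  simpa only [Function.comp_apply, e.sum_comp (fun r => α r • u r),
    e.sum_comp (fun r => α r * f (u r) y)] using h

theorem apply_sum_smul_of_mem (hX : X = convexHull ℝ S) (hf : ReproducesMixtures X S f)
    {x : ι → Fin l → ℝ} {α : ι → ℝ} (hx : ∀ r, x r ∈ X) (hα : ∀ r, 0 ≤ α r)
    (hα1 : ∑ r, α r = 1) {y : Fin l → ℝ} (hy : y ∈ X) :
    f (∑ r, α r • x r) y = ∑ r, α r * f (x r) y := by
  have hdec : ∀ r, ∃ (κ : Type) (_ : Fintype κ) (w : κ → ℝ) (z : κ → Fin l → ℝ),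
      (∀ i, 0 ≤ w i) ∧ ∑ i, w i = 1 ∧ (∀ i, z i ∈ S) ∧ ∑ i, w i • z i = x r := fun r =>
    mem_convexHull_iff_exists_fintype.mp (hX ▸ hx r)
  choose κ _ w z hw hw1 hzS hzx using hdec
  have hx_eq : ∑ r, α r • x r = ∑ s : Σ r, κ r, (α s.1 * w s.1 s.2) • z s.1 s.2 := by
    simp only [Fintype.sum_sigma, ← hzx, Finset.smul_sum, smul_smul]
  rw [hx_eq, apply_sum_smul_of_mem_S hf (u := fun s : Σ r, κ r => z s.1 s.2)
    (α := fun s => α s.1 * w s.1 s.2) (fun s => hzS s.1 s.2)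
    (fun s => mul_nonneg (hα s.1) (hw s.1 s.2))
    (by simp only [Fintype.sum_sigma, ← Finset.mul_sum, hw1, mul_one, hα1]) hy,
    Fintype.sum_sigma]
  refine Finset.sum_congr rfl fun r _ => ?_
  rw [← hzx r, apply_sum_smul_of_mem_S hf (hzS r) (hw r) (hw1 r) hy, Finset.mul_sum]
  simp only [mul_assoc]

theorem sum_mul_apply_eq_of_sum_smul_eq (hX : X = convexHull ℝ S)
    (hf : ReproducesMixtures X S f)
    {x : ι → Fin l → ℝ} {P N : ι → ℝ} (hx : ∀ r, x r ∈ X) (hP : ∀ r, 0 ≤ P r)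
    (hN : ∀ r, 0 ≤ N r) (hPN : ∑ r, P r = ∑ r, N r) (hPNx : ∑ r, P r • x r = ∑ r, N r • x r)
    {y : Fin l → ℝ} (hy : y ∈ X) :
    ∑ r, P r * f (x r) y = ∑ r, N r * f (x r) y := by
  rcases (Finset.sum_nonneg fun r _ => hP r).eq_or_lt with hs | hs
  · have hP0 := (Finset.sum_eq_zero_iff_of_nonneg fun r _ => hP r).mp hs.symm
    have hN0 := (Finset.sum_eq_zero_iff_of_nonneg fun r _ => hN r).mp (hPN ▸ hs).symm
    simp [hP0, hN0]
  have hnorm : ∀ W : ι → ℝ, (∀ r, 0 ≤ W r) → ∑ r, W r = ∑ r, P r →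
      ∑ r, W r * f (x r) y = (∑ r, P r) * f ((∑ r, P r)⁻¹ • ∑ r, W r • x r) y := by
    intro W hW hWs
    simp_rw [Finset.smul_sum, smul_smul]
    rw [apply_sum_smul_of_mem hX hf (α := fun r => (∑ r, P r)⁻¹ * W r) hx
      (fun r => mul_nonneg (inv_nonneg.mpr hs.le) (hW r))
      (by rw [← Finset.mul_sum, hWs, inv_mul_cancel₀ hs.ne']) hy, Finset.mul_sum]
    exact Finset.sum_congr rfl fun r _ => by field_simp
  rw [hnorm P hP rfl, hnorm N hN hPN.symm, hPNx]

theorem apply_eq_sum_mul (hX : X = convexHull ℝ S) (hf : ReproducesMixtures X S f)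
    {x : ι → Fin l → ℝ} {c : ι → ℝ} (hx : ∀ r, x r ∈ X) (hc : ∑ r, c r = 1)
    (hcx : ∑ r, c r • x r ∈ X) {y : Fin l → ℝ} (hy : y ∈ X) :
    f (∑ r, c r • x r) y = ∑ r, c r * f (x r) y := by
  -- move the negative coefficients to the side of `∑ r, c r • x r`
  have key := sum_mul_apply_eq_of_sum_smul_eq hX hf (x := (Option.elim · (∑ r, c r • x r) x))
    (P := (Option.elim · 1 fun r => (c r)⁻)) (N := (Option.elim · 0 fun r => (c r)⁺))
    (Option.rec hcx hx) (Option.rec zero_le_one fun r => negPart_nonneg _)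
    (Option.rec le_rfl fun r => posPart_nonneg _) ?_ ?_ hy
  · simp only [Fintype.sum_option, Option.elim, one_mul, zero_mul, zero_add] at key
    have h : ∑ r, c r * f (x r) y = ∑ r, (c r)⁺ * f (x r) y - ∑ r, (c r)⁻ * f (x r) y :=
      sum_smul_eq_sum_posPart_smul_sub c _
    rw [h, ← key, add_sub_cancel_right]
  · have h : ∑ r, c r = ∑ r, (c r)⁺ - ∑ r, (c r)⁻ := by
      simpa using sum_smul_eq_sum_posPart_smul_sub c (1 : ι → ℝ)
    simp only [Fintype.sum_option, Option.elim, zero_add]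
    linarith
  · simp only [Fintype.sum_option, Option.elim, one_smul, zero_smul, zero_add,
      sum_smul_eq_sum_posPart_smul_sub c x, sub_add_cancel]

theorem apply_eq_dotProduct_mulVec (hX : X = convexHull ℝ S) (hf : ReproducesMixtures X S f)
    (hsym : ∀ x ∈ X, ∀ y ∈ X, f x y = f y x) {n : ℕ} {ρ : Fin n → Fin l → ℝ}
    (hρ : ∀ i, ρ i ∈ X) {κ : (Fin l → ℝ) →ᵃ[ℝ] (Fin n → ℝ)}
    (hκ : ∀ x ∈ X, ∑ i, κ x i = 1 ∧ ∑ i, κ x i • ρ i = x) {x y : Fin l → ℝ} (hx : x ∈ X)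
    (hy : y ∈ X) : f x y = κ x ⬝ᵥ (of fun i j => f (ρ i) (ρ j)) *ᵥ κ y := by
  have hexp : ∀ x ∈ X, ∀ z ∈ X, f x z = ∑ i, κ x i * f (ρ i) z := fun x hx z hz => by
    conv_lhs => rw [← (hκ x hx).2]
    exact apply_eq_sum_mul hX hf hρ (hκ x hx).1 (by rwa [(hκ x hx).2]) hz
  rw [hexp x hx y hy]
  refine Finset.sum_congr rfl fun i _ => ?_
  rw [hsym _ (hρ i) _ hy, hexp y hy _ (hρ i), mulVec, dotProduct]
  congr 1
  exact Finset.sum_congr rfl fun j _ => by rw [of_apply, hsym _ (hρ j) _ (hρ i)]; ring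

end ReproducesMixtures

theorem grdpg_representation_general (l : ℕ)
    (X S : Set (Fin l → ℝ)) (hX : X = convexHull ℝ S)
    (f : (Fin l → ℝ) → (Fin l → ℝ) → ℝ)
    (hrange : ∀ x ∈ X, ∀ y ∈ X, f x y ∈ Set.Icc (0 : ℝ) 1)
    (hsym : ∀ x ∈ X, ∀ y ∈ X, f x y = f y x) :
    ReproducesMixtures X S f ↔
      ∃ (p q : ℕ), 1 ≤ p ∧ p + q ≤ l + 1 ∧
        ∃ (T : Matrix (Fin (p + q)) (Fin l) ℝ) (ν : Fin (p + q) → ℝ),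
          ∀ x ∈ X, ∀ y ∈ X,
            f x y = (T.mulVec x + ν) ⬝ᵥ (Ipq p q).mulVec (T.mulVec y + ν) := by
  constructor
  · intro hf
    rcases X.eq_empty_or_nonempty with rfl | ⟨x₀, hx₀⟩
    · exact ⟨1, 0, le_rfl, by omega, 0, 0, by simp⟩
    obtain ⟨n, hn, ρ, hρ, κ, hκ⟩ := exists_affine_coordinates (k := ℝ) X
    have hrep : ∀ {x y}, x ∈ X → y ∈ X → f x y = κ x ⬝ᵥ (of fun i j => f (ρ i) (ρ j)) *ᵥ κ y :=
      hf.apply_eq_dotProduct_mulVec hX hsym hρ hκ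
    have hA : (of fun i j => f (ρ i) (ρ j)).IsHermitian :=
      IsHermitian.ext fun i j => hsym _ (hρ j) _ (hρ i)
    have hκ₀ : κ x₀ ≠ 0 := fun h => by simpa [h] using (hκ x₀ hx₀).1
    obtain ⟨p, q, hp, hpq, M, hM⟩ :=
      hA.exists_eq_transpose_mul_Ipq_mul hκ₀ (hrep hx₀ hx₀ ▸ (hrange x₀ hx₀ x₀ hx₀).1)
    obtain ⟨C, c, hCc⟩ := κ.exists_matrix_mulVec_add
    refine ⟨p, q, hp, by simpa [hpq] using hn, M * C, M *ᵥ c, fun x hx y hy => ?_⟩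
    rw [hrep hx hy, hM, dotProduct_transpose_mul_mul_mulVec, hCc, hCc, mulVec_add, mulVec_add,
      mulVec_mulVec, mulVec_mulVec]
  · rintro ⟨p, q, -, -, T, ν, hTν⟩
    refine reproducesMixtures_of_affine (hX ▸ convex_convexHull ℝ S) (hX ▸ subset_convexHull ℝ S)
      fun y hy => ⟨(Ipq p q *ᵥ (T *ᵥ y + ν)) ᵥ* T, ν ⬝ᵥ Ipq p q *ᵥ (T *ᵥ y + ν), fun x hx => ?_⟩
    rw [hTν x hx y hy, add_dotProduct, dotProduct_comm (T *ᵥ x), dotProduct_mulVec,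
      dotProduct_comm]

/-- Theorem 1 (representation): a symmetric kernel `f : 𝒳 × 𝒳 → [0,1]` on a convex set
`𝒳 = conv(S) ⊆ ℝ^l` reproduces mixtures of connectivity behaviours from `S` iff there are
`p ≥ 1`, `q ≥ 0` with `d = p + q ≤ l + 1`, `T ∈ ℝ^{d×l}` and `ν ∈ ℝ^d` such that
`f(x,y) = (Tx + ν)ᵀ I_{p,q} (Ty + ν)` on `𝒳 × 𝒳`. -/
theorem grdpg_representation (l : ℕ) (hl : 0 < l)
    (X S : Set (Fin l → ℝ)) (hSX : S ⊆ X) (hX : X = convexHull ℝ S)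
    (hXconv : Convex ℝ X)
    (f : (Fin l → ℝ) → (Fin l → ℝ) → ℝ)
    (hrange : ∀ x ∈ X, ∀ y ∈ X, f x y ∈ Set.Icc (0 : ℝ) 1)
    (hsym : ∀ x ∈ X, ∀ y ∈ X, f x y = f y x) :
    ReproducesMixtures X S f ↔
      ∃ (p q : ℕ), 1 ≤ p ∧ p + q ≤ l + 1 ∧
        ∃ (T : Matrix (Fin (p + q)) (Fin l) ℝ) (ν : Fin (p + q) → ℝ),
          ∀ x ∈ X, ∀ y ∈ X,
            f x y = (T.mulVec x + ν) ⬝ᵥ (Ipq p q).mulVec (T.mulVec y + ν) :=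
  grdpg_representation_general l X S hX f hrange hsym
end

section
/- Let l be a positive integer, 𝒳 a convex subset of ℝ^l that is the convex hull of a subset S ⊆ 𝒳, and f : 𝒳 × 𝒳 → [0,1] a symmetric function. Then f reproduces mixtures of connectivity behaviours from S if and only if there exists a symmetric bi-affine function g : aff(𝒳) × aff(𝒳) → ℝ whose restriction to 𝒳 × 𝒳 equals f. -/
open scoped BigOperators
open Matrix

/-- `g` is bi-affine on a set `A` (in each argument, affine along lines within `A`). -/
def BiAffineOn {l : ℕ} (A : Set (Fin l → ℝ))
    (g : (Fin l → ℝ) → (Fin l → ℝ) → ℝ) : Prop :=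
  (∀ x₁ ∈ A, ∀ x₂ ∈ A, ∀ y ∈ A, ∀ t : ℝ,
      g (t • x₁ + (1 - t) • x₂) y = t * g x₁ y + (1 - t) * g x₂ y) ∧
  (∀ x ∈ A, ∀ y₁ ∈ A, ∀ y₂ ∈ A, ∀ t : ℝ,
      g x (t • y₁ + (1 - t) • y₂) = t * g x y₁ + (1 - t) * g x y₂)

/-!
A function that commutes with mixtures of points of `S` also annihilates every signed affine
relation among such points: split the relation into its positive and negative parts, two
mixtures with the same barycentre. Take an affine basis `b` of the whole space extending an
affine basis of `aff S` chosen inside `S`; then on `X`, `f (·, v)` is the barycentric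
interpolation `∑ i, λᵢ x * f (bᵢ, v)`, and interpolating in both arguments gives the bi-affine
extension `g x y = ∑ i j, λᵢ x * λⱼ y * f (bᵢ, bⱼ)`. Conversely, a bi-affine `g` makes
`f (·, y)` both convex and concave on `X`, so Jensen's inequality holds with equality.
-/

open Finset

universe u

variable {E : Type u} [AddCommGroup E] [Module ℝ E]

def AffineOnMixtures (S : Set E) (φ : E → ℝ) : Prop :=
  ∀ (m : ℕ) (u : Fin m → E) (w : Fin m → ℝ), (∀ r, u r ∈ S) → (∀ r, 0 ≤ w r) → ∑ r, w r = 1 →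
    φ (∑ r, w r • u r) = ∑ r, w r * φ (u r)

theorem reproducesMixtures_iff_forall_affineOnMixtures {l : ℕ} {X S : Set (Fin l → ℝ)}
    {f : (Fin l → ℝ) → (Fin l → ℝ) → ℝ} :
    ReproducesMixtures X S f ↔ ∀ y ∈ X, AffineOnMixtures S (f · y) := by
  refine ⟨fun hf y hy m u w hu hw₀ hw₁ => hf m u w hu (fun r => ⟨hw₀ r, ?_⟩) hw₁ y hy,
    fun hf m u w hu hw hw₁ y hy => hf y hy m u w hu (fun r => (hw r).1) hw₁⟩
  exact hw₁ ▸ single_le_sum (fun i _ => hw₀ i) (mem_univ r)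

theorem sum_equivFin_subtype_of_eq_zero {ι M : Type*} [Fintype ι] [AddCommMonoid M]
    (p : ι → Prop) [DecidablePred p] (F : ι → M) (hF : ∀ r, ¬p r → F r = 0) :
    ∑ k, F ((Fintype.equivFin {r // p r}).symm k) = ∑ r, F r := by
  rw [Equiv.sum_comp (Fintype.equivFin {r // p r}).symm fun r => F r]
  exact (Finset.sum_congr_set {r | p r} F _ (fun _ _ => rfl) hF).symm

namespace AffineOnMixtures

variable {S : Set E} {φ : E → ℝ}

theorem congr (hφ : AffineOnMixtures S φ) {ψ : E → ℝ} (h : Set.EqOn φ ψ (convexHull ℝ S)) :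
    AffineOnMixtures S ψ := by
  intro m u w hu hw₀ hw₁
  have hmem : ∑ r, w r • u r ∈ convexHull ℝ S :=
    mem_convexHull_of_exists_fintype w u hw₀ hw₁ hu rfl
  rw [← h hmem, hφ m u w hu hw₀ hw₁]
  exact sum_congr rfl fun r _ => by rw [h (subset_convexHull ℝ S (hu r))]

theorem map_sum (hφ : AffineOnMixtures S φ) {ι : Type*} [Fintype ι] (u : ι → E) (w : ι → ℝ)
    (hu : ∀ r, w r ≠ 0 → u r ∈ S) (hw₀ : ∀ r, 0 ≤ w r) (hw₁ : ∑ r, w r = 1) :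
    φ (∑ r, w r • u r) = ∑ r, w r * φ (u r) := by
  classical
  let e := (Fintype.equivFin {r // w r ≠ 0}).symm
  have key := hφ _ (fun k => u (e k)) (fun k => w (e k)) (fun k => hu _ (e k).2) (fun k => hw₀ _)
    ((sum_equivFin_subtype_of_eq_zero _ w fun _ => not_not.1).trans hw₁)
  rwa [sum_equivFin_subtype_of_eq_zero _ (fun r => w r • u r) (by simp_all),
    sum_equivFin_subtype_of_eq_zero _ (fun r => w r * φ (u r)) (by simp_all)] at key

theorem sum_mul_eq_zero (hφ : AffineOnMixtures S φ) {ι : Type*} [Fintype ι]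
    (u : ι → E) (c : ι → ℝ) (hu : ∀ r, c r ≠ 0 → u r ∈ S) (hc : ∑ r, c r = 0)
    (hcu : ∑ r, c r • u r = 0) : ∑ r, c r * φ (u r) = 0 := by
  set p : ι → ℝ := fun r => max (c r) 0
  set n : ι → ℝ := fun r => max (-c r) 0
  have hpn (r : ι) : p r - n r = c r := max_zero_sub_max_neg_zero_eq_self (c r)
  set P := ∑ r, p r
  have hnP : ∑ r, n r = P := by
    have : ∑ r, (p r - n r) = 0 := by simpa only [hpn] using hc
    rw [sum_sub_distrib] at this
    linarith
  have hp₀ (r : ι) : 0 ≤ p r := le_max_right _ _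
  have hn₀ (r : ι) : 0 ≤ n r := le_max_right _ _
  rcases (sum_nonneg fun r _ => hp₀ r : 0 ≤ P).eq_or_lt with hP | hP
  · have hc0 (r : ι) : c r = 0 := by
      have hp := (sum_eq_zero_iff_of_nonneg fun r _ => hp₀ r).1 hP.symm r (mem_univ r)
      have hn := (sum_eq_zero_iff_of_nonneg fun r _ => hn₀ r).1 (hnP.trans hP.symm) r (mem_univ r)
      linarith [hpn r]
    simp [hc0]
  have hP₀ : P ≠ 0 := hP.ne'
  -- `c` splits into two convex combinations with the same barycentre.
  have mix (q : ι → ℝ) (hq₀ : ∀ r, 0 ≤ q r) (hq : ∀ r, c r = 0 → q r = 0) (hqP : ∑ r, q r = P) :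
      φ (∑ r, (q r / P) • u r) = ∑ r, q r / P * φ (u r) := by
    refine hφ.map_sum u _ (fun r hr => hu r fun h => hr (by rw [hq r h, zero_div]))
      (fun r => div_nonneg (hq₀ r) hP.le) ?_
    rw [← sum_div, hqP, div_self hP₀]
  have hbary : ∑ r, (p r / P) • u r = ∑ r, (n r / P) • u r := by
    rw [← sub_eq_zero, ← sum_sub_distrib]
    simp_rw [← sub_smul, ← sub_div, hpn, div_eq_inv_mul, mul_smul, ← smul_sum, hcu, smul_zero]
  calc ∑ r, c r * φ (u r) = P * (∑ r, p r / P * φ (u r) - ∑ r, n r / P * φ (u r)) := by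
        rw [← sum_sub_distrib, mul_sum]
        refine sum_congr rfl fun r _ => ?_
        rw [← hpn r]
        field_simp
    _ = 0 := by
        rw [← mix p hp₀ (fun r h => by simp [p, h]) rfl,
          ← mix n hn₀ (fun r h => by simp [n, h]) hnP, hbary, sub_self, mul_zero]

theorem sum_coord_mul_eq (hφ : AffineOnMixtures S φ) {ι : Type*} [Fintype ι]
    (b : AffineBasis ι ℝ E) {y : E} (hy : y ∈ convexHull ℝ S)
    (hb : ∀ i, b.coord i y ≠ 0 → b i ∈ S) :
    ∑ i, b.coord i y * φ (b i) = φ y := by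
  obtain ⟨κ, _, w, z, hw₀, hw₁, hz, hwz⟩ := mem_convexHull_iff_exists_fintype.1 hy
  have key := hφ.sum_mul_eq_zero (Sum.elim b z) (Sum.elim (b.coord · y) (-w))
    (fun | .inl i => hb i | .inr a => fun _ => hz a) ?_ ?_
  · rw [← hwz, hφ.map_sum z w (fun a _ => hz a) hw₀ hw₁, hwz]
    simp only [Fintype.sum_sum_type, Sum.elim_inl, Sum.elim_inr, Pi.neg_apply, neg_mul,
      sum_neg_distrib] at key
    linarith
  · simp [Fintype.sum_sum_type, b.sum_coord_apply_eq_one, hw₁]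
  · simp [Fintype.sum_sum_type, b.linear_combination_coord_eq_self, hwz]

theorem of_combo_eq {X : Set E} (hX : Convex ℝ X) (hSX : S ⊆ X)
    (hφ : ∀ x₁ ∈ X, ∀ x₂ ∈ X, ∀ a b : ℝ, 0 ≤ a → 0 ≤ b → a + b = 1 →
      φ (a • x₁ + b • x₂) = a * φ x₁ + b * φ x₂) :
    AffineOnMixtures S φ := by
  have hconvex : ConvexOn ℝ X φ :=
    ⟨hX, fun x₁ hx₁ x₂ hx₂ a b ha hb hab => (hφ x₁ hx₁ x₂ hx₂ a b ha hb hab).le⟩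
  have hconcave : ConcaveOn ℝ X φ :=
    ⟨hX, fun x₁ hx₁ x₂ hx₂ a b ha hb hab => (hφ x₁ hx₁ x₂ hx₂ a b ha hb hab).ge⟩
  intro m u w hu hw₀ hw₁
  have hmem : ∀ r ∈ univ, u r ∈ X := fun r _ => hSX (hu r)
  exact le_antisymm (hconvex.map_sum_le (fun r _ => hw₀ r) hw₁ hmem)
    (hconcave.le_map_sum (fun r _ => hw₀ r) hw₁ hmem)

end AffineOnMixtures

theorem exists_symm_extension_affineOnMixtures {S : Set E} {f : E → E → ℝ}
    (hsym : ∀ x ∈ convexHull ℝ S, ∀ y ∈ convexHull ℝ S, f x y = f y x)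
    (hf : ∀ y ∈ convexHull ℝ S, AffineOnMixtures S (f · y)) :
    ∃ F : E → E → ℝ, (∀ x y, F x y = F y x) ∧ (∀ v, AffineOnMixtures S (F · v)) ∧
      ∀ x ∈ convexHull ℝ S, ∀ y ∈ convexHull ℝ S, F x y = f x y := by
  classical
  -- Cutting `f` off outside `conv S × conv S` makes it symmetric everywhere.
  refine ⟨fun x y => if x ∈ convexHull ℝ S ∧ y ∈ convexHull ℝ S then f x y else 0,
    fun x y => ?_, fun v => ?_, fun x hx y hy => if_pos ⟨hx, hy⟩⟩
  · by_cases h : x ∈ convexHull ℝ S ∧ y ∈ convexHull ℝ S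
    · simp [h, hsym x h.1 y h.2]
    · simp [h, and_comm.not.1 h]
  · by_cases hv : v ∈ convexHull ℝ S
    · exact (hf v hv).congr fun x hx => by simp [hx, hv]
    · exact fun _ _ _ _ _ _ => by simp [hv]

theorem exists_affineBasis_coord_ne_zero [FiniteDimensional ℝ E] (S : Set E) :
    ∃ (ι : Type u) (_ : Fintype ι) (b : AffineBasis ι ℝ E),
      ∀ x ∈ affineSpan ℝ S, ∀ i, b.coord i x ≠ 0 → b i ∈ S := by
  -- The coordinates of the points added to an affine basis of `affineSpan ℝ S` taken inside `S`
  -- vanish on `affineSpan ℝ S`.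
  obtain ⟨t, htS, hspan, hind⟩ := exists_affineIndependent ℝ E S
  obtain ⟨T, htT, hTind, hTtop⟩ := exists_subset_affineIndependent_affineSpan_eq_top hind
  let b : AffineBasis T ℝ E := ⟨(↑), hTind, by rwa [Subtype.range_coe]⟩
  have := b.finite
  refine ⟨T, Fintype.ofFinite T, b, fun x hx i hi => htS ?_⟩
  by_contra hit
  have hle : affineSpan ℝ t ≤ (AffineSubspace.mk' 0 ⊥).comap (b.coord i) := by
    refine affineSpan_le.2 fun p hp => ?_
    have hpi : (⟨p, htT hp⟩ : T) ≠ i := fun h => hit (h ▸ hp)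
    have hbp : b ⟨p, htT hp⟩ = p := rfl
    simpa [AffineSubspace.mem_comap, hbp] using b.coord_apply_ne hpi.symm
  exact hi (by simpa [AffineSubspace.mem_comap] using hle (hspan ▸ hx))

namespace AffineBasis

variable {ι : Type*} [Fintype ι] (b : AffineBasis ι ℝ E)

noncomputable def biaffineExtension (F : E → E → ℝ) (x y : E) : ℝ :=
  ∑ i, ∑ j, b.coord i x * b.coord j y * F (b i) (b j)

theorem biaffineExtension_comm {F : E → E → ℝ} (hF : ∀ x y, F x y = F y x) (x y : E) :
    b.biaffineExtension F x y = b.biaffineExtension F y x := by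
  unfold biaffineExtension
  rw [sum_comm]
  refine sum_congr rfl fun i _ => sum_congr rfl fun j _ => ?_
  rw [hF]
  ring

theorem biaffineExtension_combo_left (F : E → E → ℝ) (x₁ x₂ y : E) (t : ℝ) :
    b.biaffineExtension F (t • x₁ + (1 - t) • x₂) y =
      t * b.biaffineExtension F x₁ y + (1 - t) * b.biaffineExtension F x₂ y := by
  simp only [biaffineExtension, Convex.combo_affine_apply (add_sub_cancel t 1), smul_eq_mul,
    add_mul, mul_assoc, sum_add_distrib, mul_sum]

theorem biaffineExtension_combo_right (F : E → E → ℝ) (x y₁ y₂ : E) (t : ℝ) :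
    b.biaffineExtension F x (t • y₁ + (1 - t) • y₂) =
      t * b.biaffineExtension F x y₁ + (1 - t) * b.biaffineExtension F x y₂ := by
  simp only [biaffineExtension, Convex.combo_affine_apply (add_sub_cancel t 1), smul_eq_mul,
    add_mul, mul_add, mul_assoc, mul_left_comm _ t, mul_left_comm _ (1 - t), sum_add_distrib,
    mul_sum]

theorem biaffineExtension_eq {S : Set E} {F : E → E → ℝ} (hF : ∀ x y, F x y = F y x)
    (hFS : ∀ v, AffineOnMixtures S (F · v))
    (hb : ∀ x ∈ affineSpan ℝ S, ∀ i, b.coord i x ≠ 0 → b i ∈ S) {x y : E}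
    (hx : x ∈ convexHull ℝ S) (hy : y ∈ convexHull ℝ S) :
    b.biaffineExtension F x y = F x y :=
  have hbx := hb x (convexHull_subset_affineSpan S hx)
  have hby := hb y (convexHull_subset_affineSpan S hy)
  calc b.biaffineExtension F x y
      = ∑ i, b.coord i x * ∑ j, b.coord j y * F (b j) (b i) := by
        simp only [biaffineExtension, mul_sum, mul_assoc, hF (b _) (b _)]
    _ = ∑ i, b.coord i x * F (b i) y := by
        simp only [(hFS _).sum_coord_mul_eq b hy hby, hF y]
    _ = F x y := (hFS y).sum_coord_mul_eq b hx hbx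

end AffineBasis

theorem biaffine_extension_general (l : ℕ)
    (X S : Set (Fin l → ℝ)) (hX : X = convexHull ℝ S)
    (f : (Fin l → ℝ) → (Fin l → ℝ) → ℝ)
    (hsym : ∀ x ∈ X, ∀ y ∈ X, f x y = f y x) :
    ReproducesMixtures X S f ↔
      ∃ g : (Fin l → ℝ) → (Fin l → ℝ) → ℝ,
        (∀ x ∈ (affineSpan ℝ X : Set (Fin l → ℝ)),
          ∀ y ∈ (affineSpan ℝ X : Set (Fin l → ℝ)), g x y = g y x) ∧
        BiAffineOn (affineSpan ℝ X : Set (Fin l → ℝ)) g ∧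
        (∀ x ∈ X, ∀ y ∈ X, g x y = f x y) := by
  subst hX
  rw [reproducesMixtures_iff_forall_affineOnMixtures]
  constructor
  · intro hf
    obtain ⟨F, hF, hFS, hFf⟩ := exists_symm_extension_affineOnMixtures hsym hf
    obtain ⟨ι, _, b, hb⟩ := exists_affineBasis_coord_ne_zero S
    refine ⟨b.biaffineExtension F, fun x _ y _ => b.biaffineExtension_comm hF x y, ?_,
      fun x hx y hy => ?_⟩
    · exact ⟨fun x₁ _ x₂ _ y _ => b.biaffineExtension_combo_left F x₁ x₂ y,
        fun x _ y₁ _ y₂ _ => b.biaffineExtension_combo_right F x y₁ y₂⟩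
    · rw [b.biaffineExtension_eq hF hFS hb hx hy, hFf x hx y hy]
  · rintro ⟨g, -, ⟨hg, -⟩, hgf⟩ y hy
    refine AffineOnMixtures.of_combo_eq (convex_convexHull ℝ S) (subset_convexHull ℝ S)
      fun x₁ hx₁ x₂ hx₂ a b ha hb hab => ?_
    obtain rfl : b = 1 - a := eq_sub_of_add_eq' hab
    have hspan := subset_affineSpan ℝ (convexHull ℝ S)
    rw [← hgf _ (convex_convexHull ℝ S hx₁ hx₂ ha hb hab) _ hy, ← hgf _ hx₁ _ hy,
      ← hgf _ hx₂ _ hy]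
    exact hg _ (hspan hx₁) _ (hspan hx₂) _ (hspan hy) a

/-- Lemma 1 (bi-affine extension): a symmetric kernel `f : 𝒳 × 𝒳 → [0,1]` on a convex set
`𝒳 = conv(S) ⊆ ℝ^l` reproduces mixtures of connectivity behaviours from `S` iff it extends
to a symmetric bi-affine function `g : aff(𝒳) × aff(𝒳) → ℝ`. -/
theorem biaffine_extension (l : ℕ) (hl : 0 < l)
    (X S : Set (Fin l → ℝ)) (hSX : S ⊆ X) (hX : X = convexHull ℝ S)
    (hXconv : Convex ℝ X)
    (f : (Fin l → ℝ) → (Fin l → ℝ) → ℝ)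
    (hrange : ∀ x ∈ X, ∀ y ∈ X, f x y ∈ Set.Icc (0 : ℝ) 1)
    (hsym : ∀ x ∈ X, ∀ y ∈ X, f x y = f y x) :
    ReproducesMixtures X S f ↔
      ∃ g : (Fin l → ℝ) → (Fin l → ℝ) → ℝ,
        (∀ x ∈ (affineSpan ℝ X : Set (Fin l → ℝ)),
          ∀ y ∈ (affineSpan ℝ X : Set (Fin l → ℝ)), g x y = g y x) ∧
        BiAffineOn (affineSpan ℝ X : Set (Fin l → ℝ)) g ∧
        (∀ x ∈ X, ∀ y ∈ X, g x y = f x y) :=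
  biaffine_extension_general l X S hX f hsym
end

section
/- Let 𝒳 be a nonempty subset of ℝ^l, let ℓ = dim(aff(𝒳)) ≤ l be the dimension of the affine hull of 𝒳, and let g : aff(𝒳) × aff(𝒳) → ℝ be a bi-affine function. Then there exist a matrix R ∈ ℝ^{(ℓ+1)×l}, a vector μ ∈ ℝ^{ℓ+1}, and a bilinear form h : ℝ^{ℓ+1} × ℝ^{ℓ+1} → ℝ such that g(x,y) = h(Rx + μ, Ry + μ) for all x, y ∈ aff(𝒳). -/
/-!
A function affine along lines of a nonempty affine subspace `S` is, on `S`, the restriction of an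
affine map (additivity of `v ↦ f (p + v) - f p` comes from the midpoint identity). Fixing a
base point `p` and a basis `bᵢ` of the direction of `S`, it is therefore determined by its values
at the `ℓ + 1` points `Pₖ = p, p + b₁, …, p + b_ℓ`, weighted by barycentric coordinates `λₖ`; these
coordinates extend to an affine map `x ↦ R x + μ` on the whole space. Expanding `g` in both
arguments gives `g x y = ∑ₖₘ λₖ(x) λₘ(y) g(Pₖ, Pₘ)`, a bilinear form in `λ(x)` and `λ(y)`.
-/

open scoped BigOperators
open Matrix

open Module

section LineAffine

variable {E F : Type*} [AddCommGroup E] [Module ℝ E] [AddCommGroup F] [Module ℝ F]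

def LineAffineOn (A : Set E) (f : E → F) : Prop :=
  ∀ x ∈ A, ∀ y ∈ A, ∀ t : ℝ, f (t • x + (1 - t) • y) = t • f x + (1 - t) • f y

theorem AffineSubspace.add_mem_of_mem_direction {S : AffineSubspace ℝ E} {p v : E}
    (hp : p ∈ S) (hv : v ∈ S.direction) : p + v ∈ S := by
  simpa [vadd_eq_add, add_comm] using AffineSubspace.vadd_mem_of_mem_direction hv hp

namespace LineAffineOn

variable {S : AffineSubspace ℝ E} {f : E → F} {p : E}

theorem map_add_sub (hf : LineAffineOn S f) (hp : p ∈ S) {u v : E} (hu : u ∈ S.direction)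
    (hv : v ∈ S.direction) :
    f (p + (u + v)) - f p = (f (p + u) - f p) + (f (p + v) - f p) := by
  have hmid := hf _ (S.add_mem_of_mem_direction hp hu) _ (S.add_mem_of_mem_direction hp hv) (1 / 2)
  have hmid' := hf _ (S.add_mem_of_mem_direction hp (S.direction.add_mem hu hv)) _ hp (1 / 2)
  have hsame : (1 / 2 : ℝ) • (p + u) + (1 - 1 / 2 : ℝ) • (p + v) =
      (1 / 2 : ℝ) • (p + (u + v)) + (1 - 1 / 2 : ℝ) • p := by module
  -- `p + (1/2) • (u + v)` is the midpoint of both `[p + u, p + v]` and `[p + (u + v), p]`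
  rw [hsame, hmid'] at hmid
  linear_combination (norm := module) (2 : ℝ) • hmid

theorem map_smul_sub (hf : LineAffineOn S f) (hp : p ∈ S) {v : E} (hv : v ∈ S.direction)
    (t : ℝ) : f (p + t • v) - f p = t • (f (p + v) - f p) := by
  have hline := hf _ (S.add_mem_of_mem_direction hp hv) _ hp t
  rw [show t • (p + v) + (1 - t) • p = p + t • v by module] at hline
  linear_combination (norm := module) hline

def linearPartAt (hf : LineAffineOn S f) (hp : p ∈ S) : S.direction →ₗ[ℝ] F where
  toFun v := f (p + v) - f p
  map_add' u v := hf.map_add_sub hp u.2 v.2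
  map_smul' t v := hf.map_smul_sub hp v.2 t

theorem apply_add_eq_sum_basis (hf : LineAffineOn S f) (hp : p ∈ S) {ι : Type*} [Fintype ι]
    (B : Basis ι ℝ S.direction) (v : S.direction) :
    f (p + v) = f p + ∑ i, B.repr v i • (f (p + B i) - f p) := by
  have h := congrArg (hf.linearPartAt hp) (B.sum_repr v)
  simp only [map_sum, map_smul] at h
  exact eq_add_of_sub_eq' h.symm

end LineAffineOn

theorem AffineSubspace.exists_barycentric_coords (S : AffineSubspace ℝ E)
    [FiniteDimensional ℝ S.direction] {p : E} (hp : p ∈ S) :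
    ∃ (L : E →ₗ[ℝ] (Fin (finrank ℝ S.direction + 1) → ℝ))
      (μ : Fin (finrank ℝ S.direction + 1) → ℝ) (P : Fin (finrank ℝ S.direction + 1) → E),
      (∀ k, P k ∈ S) ∧ ∀ f : E → F, LineAffineOn S f → ∀ x ∈ S, f x = ∑ k, (L x + μ) k • f (P k) := by
  set n := finrank ℝ S.direction
  let B := finBasis ℝ S.direction
  obtain ⟨C, hC⟩ := LinearMap.exists_extend B.equivFun.toLinearMap
  let K : (Fin n → ℝ) →ₗ[ℝ] (Fin (n + 1) → ℝ) :=
    LinearMap.pi (Fin.cons (-∑ i, LinearMap.proj i) LinearMap.proj)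
  refine ⟨K ∘ₗ C, Pi.single 0 1 - K (C p), Fin.cons p fun i => p + B i, ?_, ?_⟩
  · exact Fin.cases hp fun i => S.add_mem_of_mem_direction hp (B i).2
  intro f hf x hx
  have hxp : x - p ∈ S.direction := S.vsub_mem_direction hx hp
  set c := B.repr ⟨x - p, hxp⟩
  have hcoord : C (x - p) = c := congrArg (· ⟨x - p, hxp⟩) hC
  have hbary : (K ∘ₗ C) x + (Pi.single 0 1 - K (C p)) = Fin.cons (1 - ∑ i, c i) c := by
    rw [LinearMap.comp_apply, add_sub_left_comm, ← map_sub, ← map_sub, hcoord]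
    ext k
    refine Fin.cases ?_ (fun i => ?_) k
    · simp [K]
      ring
    · simp [K]
  calc f x = f (p + (⟨x - p, hxp⟩ : S.direction)) := by simp
    _ = f p + ∑ i, c i • (f (p + B i) - f p) := hf.apply_add_eq_sum_basis hp B _
    _ = (1 - ∑ i, c i) • f p + ∑ i, c i • f (p + B i) := by
      simp only [smul_sub, Finset.sum_sub_distrib, sub_smul, one_smul, ← Finset.sum_smul]
      abel
    _ = _ := by
      rw [hbary, Fin.sum_univ_succ]
      simp only [Fin.cons_zero, Fin.cons_succ]
      rfl

end LineAffine

namespace BiAffineOn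

variable {l : ℕ} {A : Set (Fin l → ℝ)} {g : (Fin l → ℝ) → (Fin l → ℝ) → ℝ}

theorem lineAffineOn_left (hg : BiAffineOn A g) {y : Fin l → ℝ} (hy : y ∈ A) :
    LineAffineOn A fun x => g x y :=
  fun _ hx₁ _ hx₂ t => hg.1 _ hx₁ _ hx₂ y hy t

theorem lineAffineOn_right (hg : BiAffineOn A g) {x : Fin l → ℝ} (hx : x ∈ A) :
    LineAffineOn A (g x) :=
  fun _ hy₁ _ hy₂ t => hg.2 x hx _ hy₁ _ hy₂ t

end BiAffineOn

theorem biaffine_homogenisation_general (l : ℕ) (X : Set (Fin l → ℝ)) (hXne : X.Nonempty)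
    (ℓ : ℕ) (hℓ : ℓ = Module.finrank ℝ (affineSpan ℝ X).direction)
    (g : (Fin l → ℝ) → (Fin l → ℝ) → ℝ)
    (hg : BiAffineOn (affineSpan ℝ X : Set (Fin l → ℝ)) g) :
    ∃ (R : Matrix (Fin (ℓ + 1)) (Fin l) ℝ) (μ : Fin (ℓ + 1) → ℝ)
      (h : (Fin (ℓ + 1) → ℝ) →ₗ[ℝ] (Fin (ℓ + 1) → ℝ) →ₗ[ℝ] ℝ),
      ∀ x ∈ (affineSpan ℝ X : Set (Fin l → ℝ)),
        ∀ y ∈ (affineSpan ℝ X : Set (Fin l → ℝ)),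
          g x y = h (R.mulVec x + μ) (R.mulVec y + μ) := by
  obtain ⟨p, hpX⟩ := hXne
  subst hℓ
  obtain ⟨L, μ, P, hP, hbary⟩ :=
    (affineSpan ℝ X).exists_barycentric_coords (F := ℝ) (subset_affineSpan ℝ X hpX)
  refine ⟨LinearMap.toMatrix' L, μ, Matrix.toLinearMap₂' ℝ (Matrix.of fun k m => g (P k) (P m)), ?_⟩
  intro x hx y hy
  rw [LinearMap.toMatrix'_mulVec, LinearMap.toMatrix'_mulVec, Matrix.toLinearMap₂'_apply]
  calc g x y = ∑ k, (L x + μ) k * g (P k) y := hbary _ (hg.lineAffineOn_left hy) x hx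
    _ = ∑ k, (L x + μ) k * ∑ m, (L y + μ) m * g (P k) (P m) := by
      congr! with k
      exact hbary _ (hg.lineAffineOn_right (hP k)) y hy
    _ = _ := by simp [Finset.mul_sum]

/-- Lemma 2 (homogenisation): if `g` is bi-affine on `aff(𝒳)` for a nonempty `𝒳 ⊆ ℝ^l` with
`ℓ = dim aff(𝒳)`, then there are `R ∈ ℝ^{(ℓ+1)×l}`, `μ ∈ ℝ^{ℓ+1}` and a bilinear form `h` on
`ℝ^{ℓ+1}` with `g(x,y) = h(Rx + μ, Ry + μ)` on `aff(𝒳) × aff(𝒳)`. -/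
theorem biaffine_homogenisation (l : ℕ) (X : Set (Fin l → ℝ)) (hXne : X.Nonempty)
    (ℓ : ℕ) (hℓ : ℓ = Module.finrank ℝ (affineSpan ℝ X).direction) (hℓl : ℓ ≤ l)
    (g : (Fin l → ℝ) → (Fin l → ℝ) → ℝ)
    (hg : BiAffineOn (affineSpan ℝ X : Set (Fin l → ℝ)) g) :
    ∃ (R : Matrix (Fin (ℓ + 1)) (Fin l) ℝ) (μ : Fin (ℓ + 1) → ℝ)
      (h : (Fin (ℓ + 1) → ℝ) →ₗ[ℝ] (Fin (ℓ + 1) → ℝ) →ₗ[ℝ] ℝ),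
      ∀ x ∈ (affineSpan ℝ X : Set (Fin l → ℝ)),
        ∀ y ∈ (affineSpan ℝ X : Set (Fin l → ℝ)),
          g x y = h (R.mulVec x + μ) (R.mulVec y + μ) :=
  biaffine_homogenisation_general l X hXne ℓ hℓ g hg
end

section
/- Let U, V ∈ ℝ^{n×p} have orthonormal columns, i.e. UᵀU = VᵀV = I_p. Then there exists an orthogonal matrix W ∈ ℝ^{p×p} (namely W = W₁W₂ᵀ where UᵀV = W₁ Σ W₂ᵀ is a singular value decomposition of UᵀV) such that ‖UᵀV − W‖_F ≤ ‖UUᵀ − VVᵀ‖_F², where ‖·‖_F denotes the Frobenius norm. -/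
/-!
With `M = UᵀV`, the identity `1 - MᵀM = ((1 - UUᵀ)V)ᵀ((1 - UUᵀ)V)` shows that the singular values
`σᵢ` of `M` lie in `[0, 1]`, and expanding the square gives
`‖UUᵀ - VVᵀ‖_F² = 2 tr(1 - MᵀM) = 2 ∑ (1 - σᵢ²)`. For a singular value decomposition
`M = W₁ diag(σ) W₂ᵀ` the orthogonal matrix `W = W₁W₂ᵀ` satisfies
`‖M - W‖_F = ‖diag(σ - 1)‖_F ≤ ∑ (1 - σᵢ) ≤ ∑ (1 - σᵢ²)`.
-/

open scoped BigOperators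
open Matrix

/-- The Frobenius norm of a matrix. -/
noncomputable def frobNorm {n p : ℕ} (M : Matrix (Fin n) (Fin p) ℝ) : ℝ :=
  Real.sqrt (∑ i, ∑ j, (M i j) ^ 2)

namespace Matrix

variable {ι : Type*} [Fintype ι] [DecidableEq ι]

theorem exists_orthogonal_eq_mul_diagonal_sqrt {N : Matrix ι ι ℝ} {d : ι → ℝ}
    (hN : Nᵀ * N = diagonal d) :
    ∃ W ∈ orthogonalGroup ι ℝ, N = W * diagonal fun i => √(d i) := by
  let c : ι → EuclideanSpace ℝ ι := fun i => WithLp.toLp 2 fun k => N k i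
  have inner_c (i j : ι) : inner ℝ (c i) (c j) = diagonal d i j := by
    simp [c, ← hN, mul_apply, PiLp.inner_apply, mul_comm]
  have hc_zero {i : ι} (hi : d i = 0) : c i = 0 := by
    rw [← inner_self_eq_zero (𝕜 := ℝ), inner_c, diagonal_apply_eq, hi]
  have hd (i : ι) : 0 ≤ d i := by
    have := real_inner_self_nonneg (x := c i)
    rwa [inner_c, diagonal_apply_eq] at this
  -- normalise the nonzero columns of `N` and extend them to an orthonormal basis
  let s : Set ι := {i | d i ≠ 0}
  have hortho : Orthonormal ℝ (s.domRestrict fun i => (√(d i))⁻¹ • c i) := by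
    rw [orthonormal_iff_ite]
    rintro ⟨i, hi⟩ ⟨j, hj⟩
    simp only [Set.domRestrict, real_inner_smul_left, real_inner_smul_right, inner_c,
      Subtype.mk.injEq]
    by_cases hij : i = j
    · subst hij
      rw [diagonal_apply_eq, if_pos rfl]
      have : √(d i) ≠ 0 := Real.sqrt_ne_zero'.2 ((hd i).lt_of_ne' hi)
      field_simp
      exact (Real.sq_sqrt (hd i)).symm
    · rw [diagonal_apply_ne _ hij, if_neg hij, mul_zero, mul_zero]
  obtain ⟨b, hb⟩ := hortho.exists_orthonormalBasis_extension_of_card_eq (by simp)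
  refine ⟨(EuclideanSpace.basisFun ι ℝ).toBasis.toMatrix b.toBasis,
    (EuclideanSpace.basisFun ι ℝ).toMatrix_orthonormalBasis_mem_orthogonal b, ?_⟩
  ext k i
  rw [mul_diagonal]
  by_cases hi : d i = 0
  · simpa [hi] using congrArg (· k) (hc_zero hi)
  · have : √(d i) ≠ 0 := Real.sqrt_ne_zero'.2 ((hd i).lt_of_ne' hi)
    simp only [Module.Basis.toMatrix_apply, OrthonormalBasis.coe_toBasis_repr_apply,
      EuclideanSpace.basisFun_repr, OrthonormalBasis.coe_toBasis, hb i hi,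
      PiLp.smul_apply, smul_eq_mul]
    field_simp
    rfl

theorem exists_singularValueDecomposition (M : Matrix ι ι ℝ) :
    ∃ W ∈ orthogonalGroup ι ℝ, ∃ Q ∈ orthogonalGroup ι ℝ, ∃ σ : ι → ℝ,
      (∀ i, 0 ≤ σ i) ∧ M = W * diagonal σ * Qᵀ := by
  have hA : (Mᵀ * M).IsHermitian :=
    conjTranspose_eq_transpose_of_trivial M ▸ isHermitian_conjTranspose_mul_self M
  let Q : Matrix ι ι ℝ := hA.eigenvectorUnitary
  have hQ : Q ∈ orthogonalGroup ι ℝ := hA.eigenvectorUnitary.2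
  have hdiag : (M * Q)ᵀ * (M * Q) = diagonal hA.eigenvalues := by
    have := hA.conjStarAlgAut_star_eigenvectorUnitary
    rw [Unitary.conjStarAlgAut_star_apply, star_eq_conjTranspose,
      conjTranspose_eq_transpose_of_trivial] at this
    simpa [Matrix.mul_assoc] using this
  obtain ⟨W, hW, hMQ⟩ := exists_orthogonal_eq_mul_diagonal_sqrt hdiag
  refine ⟨W, hW, Q, hQ, fun i => √(hA.eigenvalues i), fun i => Real.sqrt_nonneg _, ?_⟩
  rw [← hMQ, Matrix.mul_assoc, (mem_orthogonalGroup_iff _ _).1 hQ, Matrix.mul_one]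

end Matrix

section frobNorm

variable {n p : ℕ}

lemma frobNorm_sq (M : Matrix (Fin n) (Fin p) ℝ) : frobNorm M ^ 2 = trace (Mᵀ * M) := by
  rw [frobNorm, Real.sq_sqrt (by positivity), trace, Finset.sum_comm]
  simp [mul_apply, sq]

lemma frobNorm_orthogonal_mul_mul_transpose {W Q : Matrix (Fin p) (Fin p) ℝ}
    (hW : W ∈ orthogonalGroup (Fin p) ℝ) (hQ : Q ∈ orthogonalGroup (Fin p) ℝ)
    (D : Matrix (Fin p) (Fin p) ℝ) : frobNorm (W * D * Qᵀ) = frobNorm D := by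
  have hsq : frobNorm (W * D * Qᵀ) ^ 2 = frobNorm D ^ 2 := by
    rw [frobNorm_sq, frobNorm_sq, transpose_mul, transpose_mul, transpose_transpose,
      show Q * (Dᵀ * Wᵀ) * (W * D * Qᵀ) = Q * (Dᵀ * (Wᵀ * W) * D) * Qᵀ by
        simp only [Matrix.mul_assoc],
      (mem_orthogonalGroup_iff' _ _).1 hW, Matrix.mul_one, trace_mul_cycle,
      (mem_orthogonalGroup_iff' _ _).1 hQ, Matrix.one_mul]
  exact (sq_eq_sq₀ (Real.sqrt_nonneg _) (Real.sqrt_nonneg _)).1 hsq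

lemma frobNorm_diagonal_le_sum_abs (d : Fin p → ℝ) : frobNorm (diagonal d) ≤ ∑ i, |d i| := by
  have habs : 0 ≤ fun i => |d i| := fun i => abs_nonneg (d i)
  have hdiag : ∑ i, ∑ j, diagonal d i j ^ 2 = ∑ i, |d i| ^ 2 := by
    simp [diagonal_apply, sq_abs]
  rw [frobNorm, hdiag]
  calc √(∑ i, |d i| ^ 2) ≤ √((∑ i, |d i|) ^ 2) :=
        Real.sqrt_le_sqrt (Finset.sum_sq_le_sq_sum_of_nonneg fun i _ => habs i)
    _ = ∑ i, |d i| := Real.sqrt_sq (Finset.sum_nonneg fun i _ => habs i)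

theorem exists_orthogonal_frobNorm_sub_le_trace (M : Matrix (Fin p) (Fin p) ℝ)
    (hM : (1 - Mᵀ * M).PosSemidef) :
    ∃ W ∈ orthogonalGroup (Fin p) ℝ, frobNorm (M - W) ≤ trace (1 - Mᵀ * M) := by
  obtain ⟨W, hW, Q, hQ, σ, hσ, rfl⟩ := exists_singularValueDecomposition M
  have hgram : 1 - (W * diagonal σ * Qᵀ)ᵀ * (W * diagonal σ * Qᵀ)
      = Q * diagonal (fun i => 1 - σ i ^ 2) * Qᵀ := by
    have hdiag : diagonal (fun i => 1 - σ i ^ 2) = 1 - diagonal σ * diagonal σ := by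
      rw [diagonal_mul_diagonal, ← diagonal_one, diagonal_sub]
      simp only [sq]
    rw [hdiag, Matrix.mul_sub, Matrix.sub_mul, Matrix.mul_one, (mem_orthogonalGroup_iff _ _).1 hQ,
      transpose_mul, transpose_mul, transpose_transpose, diagonal_transpose]
    simp only [Matrix.mul_assoc, ← Matrix.mul_assoc Wᵀ, (mem_orthogonalGroup_iff' _ _).1 hW,
      Matrix.one_mul]
  have hσ_le_one (i : Fin p) : σ i ≤ 1 := by
    have hD := hM.conjTranspose_mul_mul_same Q
    rw [hgram, conjTranspose_eq_transpose_of_trivial, Matrix.mul_assoc, Matrix.mul_assoc,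
      (mem_orthogonalGroup_iff' _ _).1 hQ, Matrix.mul_one, ← Matrix.mul_assoc,
      (mem_orthogonalGroup_iff' _ _).1 hQ, Matrix.one_mul] at hD
    nlinarith [posSemidef_diagonal_iff.1 hD i, hσ i]
  have hdiff : W * diagonal σ * Qᵀ - W * Qᵀ = W * diagonal (fun i => σ i - 1) * Qᵀ := by
    rw [← Matrix.sub_mul, ← diagonal_sub, diagonal_one, Matrix.mul_sub, Matrix.mul_one]
  refine ⟨W * Qᵀ, Submonoid.mul_mem _ hW (transpose_mem_unitaryGroup_iff.2 hQ), ?_⟩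
  rw [hdiff, frobNorm_orthogonal_mul_mul_transpose hW hQ, hgram, trace_mul_cycle,
    (mem_orthogonalGroup_iff' _ _).1 hQ, Matrix.one_mul, trace_diagonal]
  refine (frobNorm_diagonal_le_sum_abs _).trans (Finset.sum_le_sum fun i _ => ?_)
  rw [abs_sub_comm, abs_of_nonneg (by linarith [hσ_le_one i])]
  nlinarith [hσ i, hσ_le_one i]

end frobNorm

section Projections

variable {m n : Type*} [Fintype m] [Fintype n] [DecidableEq n] {U V : Matrix m n ℝ}

theorem posSemidef_one_sub_transpose_mul_self_of_orthonormal [DecidableEq m]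
    (hU : Uᵀ * U = 1) (hV : Vᵀ * V = 1) :
    (1 - (Uᵀ * V)ᵀ * (Uᵀ * V)).PosSemidef := by
  have hgram : 1 - (Uᵀ * V)ᵀ * (Uᵀ * V) = ((1 - U * Uᵀ) * V)ᴴ * ((1 - U * Uᵀ) * V) := by
    simp only [conjTranspose_eq_transpose_of_trivial, transpose_mul, transpose_sub,
      transpose_transpose, Matrix.mul_sub, Matrix.sub_mul, Matrix.one_mul,
      Matrix.mul_assoc, hV]
    simp only [← Matrix.mul_assoc Uᵀ U, hU, Matrix.one_mul]
    abel
  rw [hgram]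
  exact posSemidef_conjTranspose_mul_self _

theorem trace_transpose_mul_self_sub_projections (hU : Uᵀ * U = 1) (hV : Vᵀ * V = 1) :
    trace ((U * Uᵀ - V * Vᵀ)ᵀ * (U * Uᵀ - V * Vᵀ)) = 2 * trace (1 - (Uᵀ * V)ᵀ * (Uᵀ * V)) := by
  have hUU : U * Uᵀ * (U * Uᵀ) = U * Uᵀ := by
    rw [Matrix.mul_assoc, ← Matrix.mul_assoc Uᵀ, hU, Matrix.one_mul]
  have hVV : V * Vᵀ * (V * Vᵀ) = V * Vᵀ := by
    rw [Matrix.mul_assoc, ← Matrix.mul_assoc Vᵀ, hV, Matrix.one_mul]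
  have htrU : trace (U * Uᵀ) = trace (1 : Matrix n n ℝ) := by rw [trace_mul_comm, hU]
  have htrV : trace (V * Vᵀ) = trace (1 : Matrix n n ℝ) := by rw [trace_mul_comm, hV]
  have hUV : trace (U * Uᵀ * (V * Vᵀ)) = trace ((Uᵀ * V)ᵀ * (Uᵀ * V)) := by
    rw [transpose_mul, transpose_transpose, ← Matrix.mul_assoc, trace_mul_cycle,
      ← Matrix.mul_assoc, ← Matrix.mul_assoc]
  have hVU : trace (V * Vᵀ * (U * Uᵀ)) = trace ((Uᵀ * V)ᵀ * (Uᵀ * V)) := by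
    rw [trace_mul_comm, hUV]
  simp only [transpose_sub, transpose_mul, transpose_transpose, Matrix.mul_sub, Matrix.sub_mul,
    trace_sub, hUU, hVV, htrU, htrV, hUV, hVU]
  ring

end Projections

/-- For `U, V ∈ ℝ^{n×p}` with orthonormal columns there is an orthogonal `W ∈ ℝ^{p×p}`
(the orthogonal polar factor of `UᵀV`) with `‖UᵀV − W‖_F ≤ ‖UUᵀ − VVᵀ‖_F²`. -/
theorem orthogonal_procrustes_bound (n p : ℕ)
    (U V : Matrix (Fin n) (Fin p) ℝ)
    (hU : Uᵀ * U = 1) (hV : Vᵀ * V = 1) :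
    ∃ W : Matrix (Fin p) (Fin p) ℝ, Wᵀ * W = 1 ∧
      frobNorm (Uᵀ * V - W) ≤ frobNorm (U * Uᵀ - V * Vᵀ) ^ 2 := by
  have hcos := posSemidef_one_sub_transpose_mul_self_of_orthonormal hU hV
  obtain ⟨W, hW, hle⟩ := exists_orthogonal_frobNorm_sub_le_trace (Uᵀ * V) hcos
  refine ⟨W, (mem_orthogonalGroup_iff' _ _).1 hW, hle.trans ?_⟩
  rw [frobNorm_sq, trace_transpose_mul_self_sub_projections hU hV]
  linarith [hcos.trace_nonneg]
end

section
/- Let p, q ≥ 0 with d = p + q ≥ 1 and n ≥ 1. Let U ∈ ℝ^{n×d} satisfy UᵀU = I_d, let D ∈ ℝ^{d×d} be diagonal with strictly positive diagonal entries, let W ∈ ℝ^{d×d} satisfy WWᵀ = I_d and W I_{p,q} Wᵀ = I_{p,q}, and let Q ∈ ℝ^{d×d} satisfy Q I_{p,q} Qᵀ = I_{p,q}. Set X = U D^{1/2} Q. Suppose A, P ∈ ℝ^{n×n} and X̂, R ∈ ℝ^{n×d} satisfy X̂ = U D^{1/2} W + (A − P) U D^{−1/2} W I_{p,q} + R. Then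 XᵀX = Qᵀ D Q is invertible and X̂ Wᵀ Q − X = (A − P) X (XᵀX)⁻¹ I_{p,q} + R Wᵀ Q. -/
/-!
Write `X = U B` with `B = D^{1/2} Q`. Since `U` has orthonormal columns, `XᵀX = BᵀB`, and
`B` is invertible because `Q` is: the relation `Q I_{p,q} Qᵀ = I_{p,q}` exhibits
`I_{p,q} Qᵀ I_{p,q}` as its inverse, and hence also gives `Qᵀ I_{p,q} Q = I_{p,q}`. Then
`X (XᵀX)⁻¹ = U (Bᵀ)⁻¹` and `(Bᵀ)⁻¹ I_{p,q} = D^{-1/2} I_{p,q} Q`, while the conditions on `W`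
collapse `X̂ Wᵀ Q - X` to `(A - P) U D^{-1/2} I_{p,q} Q + R Wᵀ Q`.
-/

open Matrix

theorem Ipq_mul_self (p q : ℕ) : Ipq p q * Ipq p q = 1 := by
  rw [Ipq, diagonal_mul_diagonal, ← diagonal_one]
  congr 1
  funext i
  split_ifs <;> norm_num

namespace Matrix

variable {m k R : Type*} [Fintype m] [DecidableEq m] [CommRing R]

section IndefiniteOrthogonal

variable {J Q S T : Matrix m m R}

theorem mul_mul_transpose_mul_eq_one_of_mul_mul_transpose_eq (hJ : J * J = 1)
    (hQ : Q * J * Qᵀ = J) : Q * (J * Qᵀ * J) = 1 := by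
  rw [← Matrix.mul_assoc, ← Matrix.mul_assoc, hQ, hJ]

theorem isUnit_det_of_mul_mul_transpose_eq (hJ : J * J = 1) (hQ : Q * J * Qᵀ = J) :
    IsUnit Q.det :=
  isUnit_det_of_right_inverse (mul_mul_transpose_mul_eq_one_of_mul_mul_transpose_eq hJ hQ)

theorem transpose_mul_mul_eq_of_mul_mul_transpose_eq (hJ : J * J = 1)
    (hQ : Q * J * Qᵀ = J) : Qᵀ * J * Q = J := by
  have hinv : J * Qᵀ * J * Q = 1 :=
    mul_eq_one_comm.mp (mul_mul_transpose_mul_eq_one_of_mul_mul_transpose_eq hJ hQ)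
  calc Qᵀ * J * Q = J * (J * Qᵀ * J * Q) := by
        simp only [← Matrix.mul_assoc, hJ, Matrix.one_mul]
    _ = J := by rw [hinv, Matrix.mul_one]

theorem isUnit_det_mul_of_mul_mul_transpose_eq (hST : S * T = 1) (hJ : J * J = 1) (hQ : Q * J * Qᵀ = J) : IsUnit (S * Q).det := by
  rw [det_mul]
  exact (isUnit_det_of_right_inverse hST).mul (isUnit_det_of_mul_mul_transpose_eq hJ hQ)

theorem transpose_inv_mul_eq_of_mul_mul_transpose_eq (hST : S * T = 1) (hS : Sᵀ = S)
    (hJ : J * J = 1) (hQ : Q * J * Qᵀ = J) :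
    (S * Q)ᵀ⁻¹ * J = T * J * Q := by
  have hrepr : J = (S * Q)ᵀ * (T * J * Q) :=
    calc J = Qᵀ * J * Q := (transpose_mul_mul_eq_of_mul_mul_transpose_eq hJ hQ).symm
      _ = Qᵀ * (S * T) * J * Q := by rw [hST, Matrix.mul_one]
      _ = (S * Q)ᵀ * (T * J * Q) := by rw [transpose_mul, hS]; simp only [Matrix.mul_assoc]
  conv_lhs => rw [hrepr]
  exact nonsing_inv_mul_cancel_left _ _
    (isUnit_det_transpose _ (isUnit_det_mul_of_mul_mul_transpose_eq hST hJ hQ))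

end IndefiniteOrthogonal

section OrthonormalColumns

variable [Fintype k] {U : Matrix k m R}

theorem transpose_mul_self_of_transpose_mul_self_eq_one (hU : Uᵀ * U = 1)
    (B : Matrix m m R) : (U * B)ᵀ * (U * B) = Bᵀ * B := by
  rw [transpose_mul, Matrix.mul_assoc, ← Matrix.mul_assoc Uᵀ, hU, Matrix.one_mul]

theorem isUnit_gram_of_transpose_mul_self_eq_one (hU : Uᵀ * U = 1) {B : Matrix m m R}
    (hB : IsUnit B.det) : IsUnit ((U * B)ᵀ * (U * B)) := by
  rw [transpose_mul_self_of_transpose_mul_self_eq_one hU, isUnit_iff_isUnit_det, det_mul,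
    det_transpose]
  exact hB.mul hB

theorem mul_inv_gram_of_transpose_mul_self_eq_one (hU : Uᵀ * U = 1) {B : Matrix m m R}
    (hB : IsUnit B.det) : U * B * ((U * B)ᵀ * (U * B))⁻¹ = U * Bᵀ⁻¹ := by
  rw [transpose_mul_self_of_transpose_mul_self_eq_one hU, mul_inv_rev, Matrix.mul_assoc,
    mul_nonsing_inv_cancel_left B _ hB]

end OrthonormalColumns

theorem diagonal_sqrt_mul_self {D : m → ℝ} (hD : ∀ i, 0 ≤ D i) :
    diagonal (fun i => √(D i)) * diagonal (fun i => √(D i)) = diagonal D := by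
  rw [diagonal_mul_diagonal]
  exact congrArg diagonal (funext fun i => Real.mul_self_sqrt (hD i))

theorem diagonal_sqrt_mul_diagonal_inv_sqrt {D : m → ℝ} (hD : ∀ i, 0 < D i) :
    diagonal (fun i => √(D i)) * diagonal (fun i => (√(D i))⁻¹) = 1 := by
  rw [diagonal_mul_diagonal, ← diagonal_one]
  exact congrArg diagonal (funext fun i => mul_inv_cancel₀ (Real.sqrt_pos.mpr (hD i)).ne')

end Matrix

theorem spectral_embedding_key_identity_general (p q n : ℕ)
    (U : Matrix (Fin n) (Fin (p + q)) ℝ) (hU : Uᵀ * U = 1)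
    (D : Fin (p + q) → ℝ) (hD : ∀ i, 0 < D i)
    (W : Matrix (Fin (p + q)) (Fin (p + q)) ℝ)
    (hWorth : W * Wᵀ = 1) (hWpq : W * Ipq p q * Wᵀ = Ipq p q)
    (Q : Matrix (Fin (p + q)) (Fin (p + q)) ℝ)
    (hQ : Q * Ipq p q * Qᵀ = Ipq p q)
    (X Xhat R : Matrix (Fin n) (Fin (p + q)) ℝ)
    (A P : Matrix (Fin n) (Fin n) ℝ)
    (hX : X = U * Matrix.diagonal (fun i => Real.sqrt (D i)) * Q)
    (hXhat : Xhat = U * Matrix.diagonal (fun i => Real.sqrt (D i)) * W +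
        (A - P) * U * Matrix.diagonal (fun i => (Real.sqrt (D i))⁻¹) * W * Ipq p q + R) :
    Xᵀ * X = Qᵀ * Matrix.diagonal D * Q ∧ IsUnit (Xᵀ * X) ∧
      Xhat * Wᵀ * Q - X = (A - P) * X * (Xᵀ * X)⁻¹ * Ipq p q + R * Wᵀ * Q := by
  set J := Ipq p q
  set S := diagonal fun i => √(D i)
  set T := diagonal fun i => (√(D i))⁻¹
  have hJ : J * J = 1 := Ipq_mul_self p q
  have hST : S * T = 1 := diagonal_sqrt_mul_diagonal_inv_sqrt hD
  have hS : Sᵀ = S := diagonal_transpose _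
  have hSQ : IsUnit (S * Q).det := isUnit_det_mul_of_mul_mul_transpose_eq hST hJ hQ
  have hX' : X = U * (S * Q) := by rw [hX, Matrix.mul_assoc]
  have hGram : Xᵀ * X = Qᵀ * diagonal D * Q := by
    rw [hX', transpose_mul_self_of_transpose_mul_self_eq_one hU, transpose_mul, hS,
      Matrix.mul_assoc, ← Matrix.mul_assoc S, diagonal_sqrt_mul_self fun i => (hD i).le,
      Matrix.mul_assoc]
  have hPseudo : X * (Xᵀ * X)⁻¹ * J = U * T * J * Q := by
    rw [hX', mul_inv_gram_of_transpose_mul_self_eq_one hU hSQ, Matrix.mul_assoc,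
      transpose_inv_mul_eq_of_mul_mul_transpose_eq hST hS hJ hQ]
    simp only [Matrix.mul_assoc]
  refine ⟨hGram, hX' ▸ isUnit_gram_of_transpose_mul_self_eq_one hU hSQ, ?_⟩
  calc Xhat * Wᵀ * Q - X
      = U * S * (W * Wᵀ) * Q + (A - P) * U * T * (W * J * Wᵀ) * Q + R * Wᵀ * Q - U * S * Q := by
        rw [hXhat, hX]; simp only [Matrix.add_mul, Matrix.mul_assoc]
    _ = (A - P) * (U * T * J * Q) + R * Wᵀ * Q := by
        rw [hWorth, hWpq]; simp only [Matrix.mul_one, Matrix.mul_assoc]; abel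
    _ = (A - P) * X * (Xᵀ * X)⁻¹ * J + R * Wᵀ * Q := by
        rw [← hPseudo]; simp only [Matrix.mul_assoc]

/-- The key algebraic identity relating the adjacency spectral embedding
`X̂ = U D^{1/2} W + (A − P) U D^{−1/2} W I_{p,q} + R` of a GRDPG to the latent position
matrix `X = U D^{1/2} Q`: the Gram matrix `XᵀX = Qᵀ D Q` is invertible and
`X̂ Wᵀ Q − X = (A − P) X (XᵀX)⁻¹ I_{p,q} + R Wᵀ Q`. -/
theorem spectral_embedding_key_identity (p q n : ℕ) (hd : 1 ≤ p + q) (hn : 1 ≤ n)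
    (U : Matrix (Fin n) (Fin (p + q)) ℝ) (hU : Uᵀ * U = 1)
    (D : Fin (p + q) → ℝ) (hD : ∀ i, 0 < D i)
    (W : Matrix (Fin (p + q)) (Fin (p + q)) ℝ)
    (hWorth : W * Wᵀ = 1) (hWpq : W * Ipq p q * Wᵀ = Ipq p q)
    (Q : Matrix (Fin (p + q)) (Fin (p + q)) ℝ)
    (hQ : Q * Ipq p q * Qᵀ = Ipq p q)
    (X Xhat R : Matrix (Fin n) (Fin (p + q)) ℝ)
    (A P : Matrix (Fin n) (Fin n) ℝ)
    (hX : X = U * Matrix.diagonal (fun i => Real.sqrt (D i)) * Q)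
    (hXhat : Xhat = U * Matrix.diagonal (fun i => Real.sqrt (D i)) * W +
        (A - P) * U * Matrix.diagonal (fun i => (Real.sqrt (D i))⁻¹) * W * Ipq p q + R) :
    Xᵀ * X = Qᵀ * Matrix.diagonal D * Q ∧ IsUnit (Xᵀ * X) ∧
      Xhat * Wᵀ * Q - X = (A - P) * X * (Xᵀ * X)⁻¹ * Ipq p q + R * Wᵀ * Q :=
  spectral_embedding_key_identity_general p q n U hU D hD W hWorth hWpq Q hQ X Xhat R A P hX hXhat
end
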